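/- Fix real numbers η_1, η_2 (with η_3 = −η_1 − η_2) such that none of (η_1−η_2)/2, (η_1−η_3)/2, (η_3−η_2)/2 is a non-positive integer. Then there is a constant C such that for all complex μ = (μ_1, μ_2, μ_3) with μ_3 = −μ_1−μ_2 and Re(μ_i) = η_i, |G*_b(μ)| ≤ C · M_poly( (Re(μ_1−μ_2)−1)/2 , (Re(μ_1−μ_3)−1)/2 , (Re(μ_3−μ_2)−1)/2 ; μ ) / Λ_poly(μ). -/

import Mathlib

open MeasureTheory

/-- `M_poly(a,b,c;μ) = |1+i Im(μ₁−μ₂)|^a |1+i Im(μ₁−μ₃)|^b |1+i Im(μ₂−μ₃)|^c`. -/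
noncomputable def Mpoly (a b c : ℝ) (μ₁ μ₂ μ₃ : ℂ) : ℝ :=
  ‖1 + Complex.I * (((μ₁ - μ₂).im : ℝ) : ℂ)‖ ^ a *
    ‖1 + Complex.I * (((μ₁ - μ₃).im : ℝ) : ℂ)‖ ^ b *
    ‖1 + Complex.I * (((μ₂ - μ₃).im : ℝ) : ℂ)‖ ^ c

/-- `Λ_poly(μ) = M_poly(Re(μ₁−μ₂)/2, Re(μ₁−μ₃)/2, Re(μ₂−μ₃)/2; μ)`. -/
noncomputable def Lpoly (μ₁ μ₂ μ₃ : ℂ) : ℝ :=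
  Mpoly ((μ₁ - μ₂).re / 2) ((μ₁ - μ₃).re / 2) ((μ₂ - μ₃).re / 2) μ₁ μ₂ μ₃

/-- The double residue `G*_b(μ)` of `G*(u,μ)`. -/
noncomputable def Gb (μ₁ μ₂ μ₃ : ℂ) : ℂ :=
  4 * (Real.pi : ℂ) ^ ((3 : ℂ) / 2 + μ₁ - μ₃) *
      Complex.Gamma ((μ₁ - μ₂) / 2) * Complex.Gamma ((μ₁ - μ₃) / 2) *
      Complex.Gamma ((μ₃ - μ₂) / 2) /
    (Complex.Gamma ((1 + μ₁ - μ₂) / 2) * Complex.Gamma ((1 + μ₁ - μ₃) / 2) *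
      Complex.Gamma ((1 + μ₂ - μ₃) / 2))

/-!
For `σ > 0`, Euler's limit formula writes `|Γ(σ + it)| / Γ(σ)` as the infinite product of
`|(σ + j) / (σ + j + it)|`, i.e. `exp (-½ ∑ⱼ log (1 + t² / (σ + j)²))`. The summand is convex
in `j`, so by the trapezoid rule the sum is at least its integral, which is
`π|t| - σ log (1 + t²/σ²) + O(1)`, plus half of its first term, `log (1 + t²/σ²) / 2`. This half
term is what turns the crude exponent `σ` into the Stirling exponent `σ - 1/2` in
`|Γ(σ + it)| ≪ (1 + |t|)^(σ - 1/2) e^(-π|t|/2)`.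
The recursion `Γ(z + 1) = z Γ(z)` moves this bound to every `σ` (for `|t| ≥ 1`), the reflection
formula `Γ(z) Γ(1 - z) = π / sin (πz)` turns it into the matching lower bound, and continuity
covers `|t| ≤ 1` away from the poles.

The six Gamma factors of `G*_b(μ)` pair off as `Γ(a)/Γ(a + ½)` (twice) and `Γ(a)/Γ(½ - a)`, each
of size a power of `|1 + i Im(·)|`; collecting exponents gives `M_poly(…) / Λ_poly(μ)`.
-/

open Real Filter Topology

theorem ConvexOn.sub_le_trapezoid {A g : ℝ → ℝ} {a b : ℝ} (hab : a ≤ b)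
    (hg : ConvexOn ℝ (Set.Icc a b) g) (hA : ∀ x ∈ Set.Icc a b, HasDerivAt A (g x) x) :
    A b - A a ≤ (b - a) * (g a + g b) / 2 := by
  rcases hab.eq_or_lt with rfl | hlt
  · simp
  set s := (g b - g a) / (b - a)
  -- `A` minus a primitive of the chord of `g` over `[a, b]`
  set P : ℝ → ℝ := fun x => A x - (g a * (x - a) + s * (x - a) ^ 2 / 2)
  have hP : ∀ x ∈ Set.Icc a b, HasDerivAt P (g x - (g a + s * (x - a))) x := fun x hx =>
    ((hA x hx).sub ((((hasDerivAt_id' x).sub_const a).const_mul (g a)).add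
      ((((hasDerivAt_id' x).sub_const a).pow 2).const_mul s |>.div_const 2))).congr_deriv
      (by ring)
  have hchord : ∀ x ∈ Set.Icc a b, g x ≤ g a + s * (x - a) := by
    intro x hx
    rcases hx.1.eq_or_lt with rfl | hax
    · simp
    have := hg.secant_mono (Set.left_mem_Icc.2 hab) hx (Set.right_mem_Icc.2 hab) hax.ne'
      hlt.ne' hx.2
    rw [div_le_iff₀ (sub_pos.2 hax)] at this
    linarith
  have hanti : AntitoneOn P (Set.Icc a b) :=
    antitoneOn_of_hasDerivWithinAt_nonpos (convex_Icc a b)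
      (fun x hx => (hP x hx).continuousAt.continuousWithinAt)
      (fun x hx => (hP x (interior_subset hx)).hasDerivWithinAt)
      (fun x hx => sub_nonpos.2 (hchord x (interior_subset hx)))
  have hPab := hanti (Set.left_mem_Icc.2 hab) (Set.right_mem_Icc.2 hab) hab
  have hs : s * (b - a) = g b - g a := div_mul_cancel₀ _ (sub_pos.2 hlt).ne'
  simp only [P, sub_self, mul_zero, zero_pow two_ne_zero, zero_div, add_zero] at hPab
  linear_combination hPab + (b - a) / 2 * hs

theorem ConvexOn.primitive_sub_add_le_sum {A g : ℝ → ℝ} {σ : ℝ}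
    (hg : ConvexOn ℝ (Set.Ici σ) g) (hA : ∀ x, σ ≤ x → HasDerivAt A (g x) x) (n : ℕ) :
    A (σ + n) - A σ + (g σ + g (σ + n)) / 2 ≤ ∑ j ∈ Finset.range (n + 1), g (σ + j) := by
  induction n with
  | zero => simp
  | succ n ih =>
    have hstep := (hg.subset (Set.Icc_subset_Ici_self.trans (Set.Ici_subset_Ici.2
      (by simp : σ ≤ σ + n))) (convex_Icc _ _)).sub_le_trapezoid
      (show σ + n ≤ σ + (n + 1 : ℕ) by push_cast; linarith)
      (fun x hx => hA x (by linarith [hx.1, (Nat.cast_nonneg n : (0 : ℝ) ≤ n)]))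
    rw [Finset.sum_range_succ]
    push_cast at hstep ⊢
    linarith

lemma Real.arctan_le_self {x : ℝ} (hx : 0 ≤ x) : arctan x ≤ x := by
  rcases hx.eq_or_lt with rfl | hx
  · simp
  have := Real.lt_tan (arctan_pos.2 hx) (arctan_lt_pi_div_two x)
  rw [tan_arctan] at this
  exact this.le

lemma Real.rpow_le_mul_rpow_of_le_mul {x y K : ℝ} (hx : 0 < x) (hy : 0 < y) (hxy : x ≤ K * y)
    (hyx : y ≤ K * x) (e : ℝ) : x ^ e ≤ K ^ |e| * y ^ e := by
  have hK : 0 < K := pos_of_mul_pos_left (hx.trans_le hxy) hy.le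
  rcases le_or_gt 0 e with he | he
  · rw [abs_of_nonneg he, ← Real.mul_rpow hK.le hy.le]
    exact Real.rpow_le_rpow hx.le hxy he
  · rw [abs_of_neg he, Real.rpow_neg hK.le, ← div_eq_inv_mul, ← Real.div_rpow hy.le hK.le]
    exact Real.rpow_le_rpow_of_nonpos (by positivity) ((div_le_iff₀' hK).2 hyx) he.le

lemma exists_le_mul_of_one_le_abs {F w : ℝ → ℝ} (hF : ContinuousOn F (Set.Icc (-1) 1))
    (hw : ContinuousOn w (Set.Icc (-1) 1)) (hw_pos : ∀ t, 0 < w t)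
    (h : ∃ C, ∀ t, 1 ≤ |t| → F t ≤ C * w t) : ∃ C, ∀ t, F t ≤ C * w t := by
  obtain ⟨C, hC⟩ := h
  obtain ⟨M, hM⟩ := isCompact_Icc.bddAbove_image (hF.div hw fun t _ => (hw_pos t).ne')
  refine ⟨max C M, fun t => ?_⟩
  rcases le_or_gt 1 |t| with ht | ht
  · exact (hC t ht).trans (mul_le_mul_of_nonneg_right (le_max_left _ _) (hw_pos t).le)
  · have hM_t : F t / w t ≤ M := hM ⟨t, abs_le.1 ht.le, rfl⟩
    rw [div_le_iff₀ (hw_pos t)] at hM_t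
    exact hM_t.trans (mul_le_mul_of_nonneg_right (le_max_right _ _) (hw_pos t).le)

lemma Complex.norm_sin_le_exp_abs_im (z : ℂ) : ‖Complex.sin z‖ ≤ Real.exp |z.im| := by
  rw [Complex.sin, norm_div, norm_mul, Complex.norm_I, mul_one, Complex.norm_two,
    div_le_iff₀ two_pos]
  refine (norm_sub_le _ _).trans ?_
  simp only [Complex.norm_exp, Complex.mul_re, Complex.neg_re, Complex.neg_im, Complex.I_re,
    Complex.I_im, mul_zero, mul_one, zero_sub, neg_neg]
  linarith [Real.exp_le_exp.2 (le_abs_self z.im), Real.exp_le_exp.2 (neg_le_abs z.im)]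

/-- `log (|y + it|² / y²)`, the logarithm of a factor of the Gauss product for
`|Γ(σ) / Γ(σ + it)|²`. -/
noncomputable def stirlingLog (t y : ℝ) : ℝ := Real.log (y ^ 2 + t ^ 2) - 2 * Real.log y

noncomputable def stirlingPrimitive (t y : ℝ) : ℝ := y * stirlingLog t y + 2 * t * arctan (y / t)

lemma stirlingLog_eq_log (t : ℝ) {y : ℝ} (hy : 0 < y) :
    stirlingLog t y = Real.log (1 + t ^ 2 / y ^ 2) := by
  rw [stirlingLog, show 1 + t ^ 2 / y ^ 2 = (y ^ 2 + t ^ 2) / y ^ 2 by field_simp,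
    Real.log_div (by positivity) (by positivity), Real.log_pow]
  push_cast; ring

lemma stirlingLog_abs (t y : ℝ) : stirlingLog |t| y = stirlingLog t y := by
  simp only [stirlingLog, sq_abs]

lemma stirlingLog_nonneg (t : ℝ) {y : ℝ} (hy : 0 < y) : 0 ≤ stirlingLog t y := by
  rw [stirlingLog_eq_log t hy]
  exact Real.log_nonneg (by simp only [le_add_iff_nonneg_right]; positivity)

lemma stirlingLog_le (t : ℝ) {y : ℝ} (hy : 0 < y) : stirlingLog t y ≤ t ^ 2 / y ^ 2 := by
  rw [stirlingLog_eq_log t hy]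
  linarith [Real.log_le_sub_one_of_pos (show 0 < 1 + t ^ 2 / y ^ 2 by positivity)]

lemma hasDerivAt_stirlingLog (t : ℝ) {y : ℝ} (hy : 0 < y) :
    HasDerivAt (stirlingLog t) (-2 * t ^ 2 / (y ^ 3 + t ^ 2 * y)) y := by
  have hsq : HasDerivAt (fun y : ℝ => y ^ 2 + t ^ 2) (2 * y) y := by
    simpa using (hasDerivAt_pow 2 y).add_const (t ^ 2)
  have := (hsq.log (by positivity)).sub ((Real.hasDerivAt_log hy.ne').const_mul 2)
  exact this.congr_deriv (by field_simp; ring)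

lemma hasDerivAt_stirlingPrimitive {t : ℝ} (ht : t ≠ 0) {y : ℝ} (hy : 0 < y) :
    HasDerivAt (stirlingPrimitive t) (stirlingLog t y) y := by
  have harctan : HasDerivAt (fun y => arctan (y / t)) (1 / (1 + (y / t) ^ 2) * (1 / t)) y :=
    (Real.hasDerivAt_arctan _).comp y ((hasDerivAt_id y).div_const t)
  have := ((hasDerivAt_id' y).mul (hasDerivAt_stirlingLog t hy)).add (harctan.const_mul (2 * t))
  exact this.congr_deriv (by field_simp; ring)

lemma convexOn_stirlingLog (t : ℝ) : ConvexOn ℝ (Set.Ioi 0) (stirlingLog t) := by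
  have hderiv : ∀ y ∈ Set.Ioi (0 : ℝ),
      HasDerivAt (stirlingLog t) (-2 * t ^ 2 / (y ^ 3 + t ^ 2 * y)) y :=
    fun y hy => hasDerivAt_stirlingLog t hy
  refine MonotoneOn.convexOn_of_deriv (convex_Ioi 0)
    (fun y hy => (hderiv y hy).continuousAt.continuousWithinAt)
    (fun y hy => (hderiv y (interior_subset hy)).differentiableAt.differentiableWithinAt) ?_
  rw [interior_Ioi]
  intro y₁ (hy₁ : 0 < y₁) y₂ (hy₂ : 0 < y₂) hle
  rw [(hderiv y₁ hy₁).deriv, (hderiv y₂ hy₂).deriv, div_le_div_iff₀ (by positivity) (by positivity)]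
  have hcube : y₁ ^ 3 ≤ y₂ ^ 3 := pow_le_pow_left₀ (le_of_lt hy₁) hle 3
  nlinarith [mul_nonneg (sq_nonneg t) (sub_nonneg.2 hcube),
    mul_nonneg (sq_nonneg t) (mul_nonneg (sq_nonneg t) (sub_nonneg.2 hle))]

lemma tendsto_stirlingPrimitive {t : ℝ} (ht : 0 < t) :
    Tendsto (stirlingPrimitive t) atTop (𝓝 (π * t)) := by
  have hlog : Tendsto (fun y => y * stirlingLog t y) atTop (𝓝 0) := by
    refine tendsto_of_tendsto_of_tendsto_of_le_of_le' tendsto_const_nhds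
      (tendsto_const_nhds.div_atTop tendsto_id : Tendsto (fun y : ℝ => t ^ 2 / y) atTop (𝓝 0)) ?_ ?_
    · filter_upwards [eventually_gt_atTop 0] with y hy
      exact mul_nonneg hy.le (stirlingLog_nonneg t hy)
    · filter_upwards [eventually_gt_atTop 0] with y hy
      calc y * stirlingLog t y ≤ y * (t ^ 2 / y ^ 2) :=
            mul_le_mul_of_nonneg_left (stirlingLog_le t hy) hy.le
        _ = t ^ 2 / y := by field_simp
  have harctan : Tendsto (fun y => 2 * t * arctan (y / t)) atTop (𝓝 (2 * t * (π / 2))) :=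
    ((tendsto_arctan_atTop.mono_right nhdsWithin_le_nhds).comp
      (tendsto_id.atTop_div_const ht)).const_mul _
  rw [show π * t = 0 + 2 * t * (π / 2) by ring]
  exact hlog.add harctan

lemma norm_ofReal_add_mul_I (t : ℝ) {y : ℝ} (hy : 0 < y) :
    ‖(y : ℂ) + t * Complex.I‖ = y * exp (stirlingLog t y / 2) := by
  rw [Complex.norm_add_mul_I, stirlingLog, sub_div, Real.exp_sub,
    show 2 * Real.log y / 2 = Real.log y by ring, Real.exp_log hy, Real.sqrt_eq_rpow,
    Real.rpow_def_of_pos (by positivity), mul_one_div]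
  field_simp

lemma norm_GammaSeq_add_mul_I {σ : ℝ} (hσ : 0 < σ) (t : ℝ) {n : ℕ} (hn : n ≠ 0) :
    ‖Complex.GammaSeq (σ + t * Complex.I) n‖ =
      Real.GammaSeq σ n * exp (-(∑ j ∈ Finset.range (n + 1), stirlingLog t (σ + j)) / 2) := by
  have hfactor : ∀ j : ℕ,
      ‖(σ + t * Complex.I : ℂ) + j‖ = (σ + j) * exp (stirlingLog t (σ + j) / 2) := fun j => by
    rw [← norm_ofReal_add_mul_I t (by positivity : 0 < σ + j)]
    congr 1
    push_cast
    ring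
  have hpow : ‖(n : ℂ) ^ (σ + t * Complex.I)‖ = (n : ℝ) ^ σ := by
    rw [← Complex.ofReal_natCast, Complex.norm_cpow_eq_rpow_re_of_pos (by positivity)]
    simp
  rw [Complex.GammaSeq, Real.GammaSeq, norm_div, norm_mul, hpow, Complex.norm_natCast,
    norm_prod, Finset.prod_congr rfl (fun j _ => hfactor j), Finset.prod_mul_distrib,
    ← Real.exp_sum, ← Finset.sum_div, neg_div, Real.exp_neg]
  have : 0 < ∏ j ∈ Finset.range (n + 1), (σ + j) := Finset.prod_pos fun j _ => by positivity
  field_simp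

lemma norm_Gamma_le_exp_stirlingPrimitive {σ : ℝ} (hσ : 0 < σ) {t : ℝ} (ht : t ≠ 0) :
    ‖Complex.Gamma (σ + t * Complex.I)‖ ≤
      Real.Gamma σ * exp ((stirlingPrimitive |t| σ - stirlingLog t σ / 2 - π * |t|) / 2) := by
  have hconv : ConvexOn ℝ (Set.Ici σ) (stirlingLog |t|) :=
    (convexOn_stirlingLog |t|).subset (Set.Ici_subset_Ioi.2 hσ) (convex_Ici σ)
  have hsum := hconv.primitive_sub_add_le_sum fun x hx =>
    hasDerivAt_stirlingPrimitive (abs_ne_zero.2 ht) (hσ.trans_le hx)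
  simp only [stirlingLog_abs] at hsum
  have hprimitive : Tendsto (fun n : ℕ => stirlingPrimitive |t| (σ + n)) atTop (𝓝 (π * |t|)) :=
    (tendsto_stirlingPrimitive (abs_pos.2 ht)).comp
      (tendsto_atTop_add_const_left _ σ tendsto_natCast_atTop_atTop)
  refine le_of_tendsto_of_tendsto (Complex.GammaSeq_tendsto_Gamma _).norm
    ((Real.GammaSeq_tendsto_Gamma σ).mul ((Real.continuous_exp.tendsto _).comp
      ((hprimitive.const_sub (stirlingPrimitive |t| σ - stirlingLog t σ / 2)).div_const 2)))
    ?_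
  filter_upwards [eventually_ne_atTop 0] with n hn
  rw [Function.comp_apply, norm_GammaSeq_add_mul_I hσ t hn]
  have hseq : 0 ≤ Real.GammaSeq σ n := by unfold Real.GammaSeq; positivity
  refine mul_le_mul_of_nonneg_left (Real.exp_le_exp.2 ?_) hseq
  linarith [hsum n, stirlingLog_nonneg t (by positivity : 0 < σ + n)]

lemma norm_Gamma_le_of_re_pos {σ : ℝ} (hσ : 0 < σ) {t : ℝ} (ht : t ≠ 0) :
    ‖Complex.Gamma (σ + t * Complex.I)‖ ≤ Real.Gamma σ *
      ((‖(σ : ℂ) + t * Complex.I‖ / σ) ^ (σ - 1 / 2) * exp σ * exp (-(π / 2) * |t|)) := by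
  refine (norm_Gamma_le_exp_stirlingPrimitive hσ ht).trans
    (mul_le_mul_of_nonneg_left ?_ (Real.Gamma_pos_of_pos hσ).le)
  have hlog : exp (stirlingLog t σ / 2) = ‖(σ : ℂ) + t * Complex.I‖ / σ := by
    rw [eq_div_iff hσ.ne', mul_comm]
    exact (norm_ofReal_add_mul_I t hσ).symm
  have harctan : 2 * |t| * arctan (σ / |t|) ≤ 2 * σ := by
    have := mul_le_mul_of_nonneg_left (arctan_le_self (by positivity : 0 ≤ σ / |t|))
      (by positivity : 0 ≤ 2 * |t|)
    rwa [show 2 * |t| * (σ / |t|) = 2 * σ by field_simp] at this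
  rw [← hlog, ← Real.exp_mul, ← Real.exp_add, ← Real.exp_add]
  refine Real.exp_le_exp.2 ?_
  rw [stirlingPrimitive, stirlingLog_abs]
  linarith

lemma rpow_norm_ofReal_add_mul_I_div_le {σ : ℝ} (hσ : 0 < σ) (t e : ℝ) :
    (‖(σ : ℂ) + t * Complex.I‖ / σ) ^ e ≤ (2 * (1 + σ + σ⁻¹)) ^ |e| * (1 + |t|) ^ e := by
  set r := ‖(σ : ℂ) + t * Complex.I‖
  set K := 2 * (1 + σ + σ⁻¹)
  have hr_re : σ ≤ r := by
    simpa [abs_of_pos hσ] using Complex.abs_re_le_norm ((σ : ℂ) + t * Complex.I)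
  have hr_im : |t| ≤ r := by simpa using Complex.abs_im_le_norm ((σ : ℂ) + t * Complex.I)
  have hr_le : r ≤ σ + |t| := by
    simpa [abs_of_pos hσ] using norm_add_le (σ : ℂ) (t * Complex.I)
  have hK : 1 + σ ≤ K := by
    have : 0 < σ⁻¹ := inv_pos.2 hσ
    simp only [K]; linarith
  have hKσ : 1 + σ ≤ K * σ := by
    simp only [K]; field_simp; nlinarith
  refine rpow_le_mul_rpow_of_le_mul (div_pos (hσ.trans_le hr_re) hσ) (by positivity) ?_ ?_ e
  · rw [div_le_iff₀ hσ]
    nlinarith [mul_le_mul_of_nonneg_left (show 1 ≤ K * σ by linarith) (abs_nonneg t)]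
  · rw [mul_div_assoc', le_div_iff₀ hσ]
    nlinarith [mul_le_mul_of_nonneg_left hK (hσ.trans_le hr_re).le,
      mul_le_mul_of_nonneg_left hr_im hσ.le]

/-- The size of `Γ(σ + it)` predicted by Stirling's formula. -/
noncomputable def gammaMajorant (σ t : ℝ) : ℝ := (1 + |t|) ^ (σ - 1 / 2) * exp (-(π / 2) * |t|)

lemma gammaMajorant_pos (σ t : ℝ) : 0 < gammaMajorant σ t := by
  unfold gammaMajorant; positivity

lemma continuous_gammaMajorant (σ : ℝ) : Continuous (gammaMajorant σ) :=
  ((by fun_prop : Continuous fun t : ℝ => 1 + |t|).rpow_const fun t => Or.inl (by positivity)).mul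
    (by fun_prop)

lemma gammaMajorant_add_natCast (σ t : ℝ) (m : ℕ) :
    gammaMajorant (σ + m) t = (1 + |t|) ^ m * gammaMajorant σ t := by
  rw [gammaMajorant, gammaMajorant, show σ + m - 1 / 2 = (σ - 1 / 2) + m by ring,
    Real.rpow_add (by positivity), Real.rpow_natCast]
  ring

lemma gammaMajorant_one_sub_mul_exp (σ t : ℝ) :
    gammaMajorant (1 - σ) (-t) * exp (π * |t|) = (gammaMajorant σ t)⁻¹ := by
  rw [gammaMajorant, gammaMajorant, abs_neg, show 1 - σ - 1 / 2 = -(σ - 1 / 2) by ring,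
    Real.rpow_neg (by positivity), mul_inv, ← Real.exp_neg, mul_assoc, ← Real.exp_add]
  ring_nf

lemma gammaMajorant_mul_inv (σ ρ t : ℝ) :
    gammaMajorant σ t * (gammaMajorant ρ t)⁻¹ = (1 + |t|) ^ (σ - ρ) := by
  rw [gammaMajorant, gammaMajorant, mul_inv, mul_mul_mul_comm, mul_inv_cancel₀ (exp_pos _).ne',
    mul_one, ← Real.rpow_neg (by positivity), ← Real.rpow_add (by positivity)]
  ring_nf

lemma exists_norm_Gamma_le_of_re_pos {σ : ℝ} (hσ : 0 < σ) :
    ∃ C, ∀ t : ℝ, t ≠ 0 → ‖Complex.Gamma (σ + t * Complex.I)‖ ≤ C * gammaMajorant σ t := by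
  refine ⟨Real.Gamma σ * exp σ * (2 * (1 + σ + σ⁻¹)) ^ |σ - 1 / 2|, fun t ht => ?_⟩
  calc ‖Complex.Gamma (σ + t * Complex.I)‖
      ≤ Real.Gamma σ *
          ((‖(σ : ℂ) + t * Complex.I‖ / σ) ^ (σ - 1 / 2) * exp σ * exp (-(π / 2) * |t|)) :=
        norm_Gamma_le_of_re_pos hσ ht
    _ ≤ Real.Gamma σ * ((2 * (1 + σ + σ⁻¹)) ^ |σ - 1 / 2| * (1 + |t|) ^ (σ - 1 / 2) * exp σ *
          exp (-(π / 2) * |t|)) := by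
        gcongr
        exact rpow_norm_ofReal_add_mul_I_div_le hσ t _
    _ = Real.Gamma σ * exp σ * (2 * (1 + σ + σ⁻¹)) ^ |σ - 1 / 2| * gammaMajorant σ t := by
        rw [gammaMajorant]; ring

lemma norm_Gamma_mul_abs_im_pow_le (z : ℂ) (m : ℕ) :
    ‖Complex.Gamma z‖ * |z.im| ^ m ≤ ‖Complex.Gamma (z + m)‖ := by
  induction m with
  | zero => simp
  | succ m ih =>
    by_cases hz : z + m = 0
    · have : z.im = 0 := by simpa using congrArg Complex.im hz
      simp [this]
    have him : |z.im| ≤ ‖z + m‖ := by simpa using Complex.abs_im_le_norm (z + m)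
    rw [Nat.cast_succ, ← add_assoc, Complex.Gamma_add_one _ hz, norm_mul, pow_succ, ← mul_assoc,
      mul_comm ‖z + m‖]
    exact mul_le_mul ih him (abs_nonneg _) (norm_nonneg _)

lemma exists_norm_Gamma_le_of_one_le_abs (σ : ℝ) :
    ∃ C, ∀ t : ℝ, 1 ≤ |t| → ‖Complex.Gamma (σ + t * Complex.I)‖ ≤ C * gammaMajorant σ t := by
  obtain ⟨m, hm⟩ := exists_nat_gt (-σ)
  obtain ⟨C, hC⟩ := exists_norm_Gamma_le_of_re_pos (show 0 < σ + m by linarith)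
  refine ⟨C * 2 ^ m, fun t ht => ?_⟩
  have ht_pos : 0 < |t| ^ m := pow_pos (one_pos.trans_le ht) m
  have hshift := norm_Gamma_mul_abs_im_pow_le ((σ : ℂ) + t * Complex.I) m
  rw [show (σ : ℂ) + t * Complex.I + m = ((σ + m : ℝ) : ℂ) + t * Complex.I by push_cast; ring]
    at hshift
  have hupper := hC t (abs_pos.1 (one_pos.trans_le ht))
  have hpow : (1 + |t|) ^ m ≤ 2 ^ m * |t| ^ m := by
    rw [← mul_pow]; exact pow_le_pow_left₀ (by positivity) (by linarith) m
  have hC_nonneg : 0 ≤ C := nonneg_of_mul_nonneg_left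
    ((norm_nonneg _).trans hupper) (gammaMajorant_pos _ _)
  refine le_of_mul_le_mul_right ?_ ht_pos
  calc ‖Complex.Gamma (σ + t * Complex.I)‖ * |t| ^ m
      ≤ C * ((1 + |t|) ^ m * gammaMajorant σ t) := by
        simpa [gammaMajorant_add_natCast] using hshift.trans hupper
    _ ≤ C * (2 ^ m * |t| ^ m * gammaMajorant σ t) := by
        gcongr; exact (gammaMajorant_pos σ t).le
    _ = C * 2 ^ m * gammaMajorant σ t * |t| ^ m := by ring

lemma exists_norm_Gamma_le {σ : ℝ} (hσ : ∀ n : ℤ, n ≤ 0 → σ ≠ n) :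
    ∃ C, ∀ t : ℝ, ‖Complex.Gamma (σ + t * Complex.I)‖ ≤ C * gammaMajorant σ t := by
  refine exists_le_mul_of_one_le_abs (Continuous.continuousOn ?_)
    (continuous_gammaMajorant σ).continuousOn (gammaMajorant_pos σ)
    (exists_norm_Gamma_le_of_one_le_abs σ)
  refine continuous_iff_continuousAt.2 fun t => ?_
  have hpole : ∀ m : ℕ, (σ : ℂ) + t * Complex.I ≠ -m := by
    intro m h
    have hre : σ = -(m : ℤ) := by simpa using congrArg Complex.re h
    exact hσ (-m) (by omega) (by exact_mod_cast hre)
  exact ((Complex.differentiableAt_Gamma _ hpole).continuousAt.comp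
    (f := fun t : ℝ => (σ : ℂ) + t * Complex.I) (by fun_prop)).norm

lemma Complex.inv_Gamma_eq_Gamma_one_sub_mul_sin {z : ℂ} (hz : Complex.sin (π * z) ≠ 0) :
    (Complex.Gamma z)⁻¹ = Complex.Gamma (1 - z) * Complex.sin (π * z) / π := by
  have hreflect := Complex.Gamma_mul_Gamma_one_sub z
  have hπ : (π : ℂ) ≠ 0 := Complex.ofReal_ne_zero.2 Real.pi_ne_zero
  have hΓ : Complex.Gamma z ≠ 0 := fun h => by
    rw [h, zero_mul, eq_comm, div_eq_zero_iff] at hreflect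
    exact hreflect.elim hπ hz
  rw [eq_div_iff hπ, inv_mul_eq_iff_eq_mul₀ hΓ, ← mul_assoc, hreflect, div_mul_cancel₀ _ hz]

lemma exists_inv_norm_Gamma_le_of_one_le_abs (σ : ℝ) :
    ∃ C, ∀ t : ℝ, 1 ≤ |t| →
      ‖Complex.Gamma (σ + t * Complex.I)‖⁻¹ ≤ C * (gammaMajorant σ t)⁻¹ := by
  obtain ⟨C, hC⟩ := exists_norm_Gamma_le_of_one_le_abs (1 - σ)
  refine ⟨C / π, fun t ht => ?_⟩
  set z : ℂ := σ + t * Complex.I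
  have hsin : Complex.sin (π * z) ≠ 0 := by
    refine Complex.sin_ne_zero_iff.2 fun k hk => ?_
    have : π * t = 0 := by simpa [z] using congrArg Complex.im hk
    rcases mul_eq_zero.1 this with h | h
    · exact Real.pi_ne_zero h
    · norm_num [h] at ht
  have hone_sub : 1 - z = ((1 - σ : ℝ) : ℂ) + ((-t : ℝ) : ℂ) * Complex.I := by
    simp only [z]; push_cast; ring
  have hupper := hC (-t) (by rwa [abs_neg])
  rw [← hone_sub] at hupper
  have hsin_le : ‖Complex.sin (π * z)‖ ≤ exp (π * |t|) := by
    simpa [z, abs_mul, abs_of_pos Real.pi_pos] using Complex.norm_sin_le_exp_abs_im (π * z)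
  rw [← norm_inv, Complex.inv_Gamma_eq_Gamma_one_sub_mul_sin hsin, norm_div, norm_mul,
    Complex.norm_real, Real.norm_of_nonneg Real.pi_pos.le, ← gammaMajorant_one_sub_mul_exp,
    div_le_iff₀ Real.pi_pos]
  calc ‖Complex.Gamma (1 - z)‖ * ‖Complex.sin (π * z)‖
      ≤ C * gammaMajorant (1 - σ) (-t) * exp (π * |t|) :=
        mul_le_mul hupper hsin_le (norm_nonneg _) ((norm_nonneg _).trans hupper)
    _ = C / π * (gammaMajorant (1 - σ) (-t) * exp (π * |t|)) * π := by
        field_simp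

lemma exists_inv_norm_Gamma_le (σ : ℝ) :
    ∃ C, ∀ t : ℝ, ‖Complex.Gamma (σ + t * Complex.I)‖⁻¹ ≤ C * (gammaMajorant σ t)⁻¹ := by
  refine exists_le_mul_of_one_le_abs (Continuous.continuousOn ?_)
    ((continuous_gammaMajorant σ).inv₀ fun t => (gammaMajorant_pos σ t).ne').continuousOn
    (fun t => inv_pos.2 (gammaMajorant_pos σ t)) (exists_inv_norm_Gamma_le_of_one_le_abs σ)
  simp_rw [← norm_inv]
  exact (Complex.differentiable_one_div_Gamma.continuous.comp (by fun_prop)).norm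

lemma one_add_abs_half_rpow_le (e τ : ℝ) :
    (1 + |τ| / 2) ^ e ≤ 2 ^ |e| * ‖1 + Complex.I * (τ : ℂ)‖ ^ e := by
  have hre : 1 ≤ ‖1 + Complex.I * (τ : ℂ)‖ := by
    simpa using Complex.abs_re_le_norm (1 + Complex.I * (τ : ℂ))
  have him : |τ| ≤ ‖1 + Complex.I * (τ : ℂ)‖ := by
    simpa using Complex.abs_im_le_norm (1 + Complex.I * (τ : ℂ))
  have hle : ‖1 + Complex.I * (τ : ℂ)‖ ≤ 1 + |τ| := by
    simpa using norm_add_le 1 (Complex.I * (τ : ℂ))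
  exact rpow_le_mul_rpow_of_le_mul (by positivity) (by linarith) (by linarith) (by linarith) e

lemma exists_norm_Gamma_div_le {σ : ℝ} (hσ : ∀ n : ℤ, n ≤ 0 → σ ≠ n) (ρ : ℝ) :
    ∃ C, ∀ (z w : ℂ) (τ : ℝ), z.re = σ → w.re = ρ → |z.im| = |τ| / 2 → |w.im| = |τ| / 2 →
      ‖Complex.Gamma z‖ / ‖Complex.Gamma w‖ ≤ C * ‖1 + Complex.I * (τ : ℂ)‖ ^ (σ - ρ) := by
  obtain ⟨C₁, hC₁⟩ := exists_norm_Gamma_le hσ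
  obtain ⟨C₂, hC₂⟩ := exists_inv_norm_Gamma_le ρ
  refine ⟨C₁ * C₂ * 2 ^ |σ - ρ|, fun z w τ hz hw hz_im hw_im => ?_⟩
  have hupper := hC₁ z.im
  have hlower := hC₂ w.im
  rw [show (σ : ℂ) + z.im * Complex.I = z by rw [← hz, Complex.re_add_im]] at hupper
  rw [show (ρ : ℂ) + w.im * Complex.I = w by rw [← hw, Complex.re_add_im],
    show gammaMajorant ρ w.im = gammaMajorant ρ z.im by
      rw [gammaMajorant, gammaMajorant, hz_im, hw_im]] at hlower
  have hratio := mul_le_mul hupper hlower (inv_nonneg.2 (norm_nonneg _))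
    ((norm_nonneg _).trans hupper)
  rw [mul_mul_mul_comm, gammaMajorant_mul_inv, hz_im, ← div_eq_mul_inv] at hratio
  have hC : 0 ≤ C₁ * C₂ :=
    nonneg_of_mul_nonneg_left ((div_nonneg (norm_nonneg _) (norm_nonneg _)).trans hratio)
      (by positivity)
  calc ‖Complex.Gamma z‖ / ‖Complex.Gamma w‖
      ≤ C₁ * C₂ * (1 + |τ| / 2) ^ (σ - ρ) := hratio
    _ ≤ C₁ * C₂ * (2 ^ |σ - ρ| * ‖1 + Complex.I * (τ : ℂ)‖ ^ (σ - ρ)) :=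
        mul_le_mul_of_nonneg_left (one_add_abs_half_rpow_le _ _) hC
    _ = C₁ * C₂ * 2 ^ |σ - ρ| * ‖1 + Complex.I * (τ : ℂ)‖ ^ (σ - ρ) := by ring

lemma Mpoly_div_Mpoly (a b c a' b' c' : ℝ) (μ₁ μ₂ μ₃ : ℂ) :
    Mpoly a b c μ₁ μ₂ μ₃ / Mpoly a' b' c' μ₁ μ₂ μ₃ = Mpoly (a - a') (b - b') (c - c') μ₁ μ₂ μ₃ := by
  have hpos : ∀ τ : ℝ, 0 < ‖1 + Complex.I * (τ : ℂ)‖ := fun τ =>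
    one_pos.trans_le (by simpa using Complex.abs_re_le_norm (1 + Complex.I * (τ : ℂ)))
  simp only [Mpoly, Real.rpow_sub (hpos _)]
  field_simp

lemma norm_Gb (μ₁ μ₂ μ₃ : ℂ) :
    ‖Gb μ₁ μ₂ μ₃‖ = 4 * π ^ (3 / 2 + (μ₁ - μ₃).re) *
      (‖Complex.Gamma ((μ₁ - μ₂) / 2)‖ / ‖Complex.Gamma ((1 + μ₁ - μ₂) / 2)‖) *
      (‖Complex.Gamma ((μ₁ - μ₃) / 2)‖ / ‖Complex.Gamma ((1 + μ₁ - μ₃) / 2)‖) *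
      (‖Complex.Gamma ((μ₃ - μ₂) / 2)‖ / ‖Complex.Gamma ((1 + μ₂ - μ₃) / 2)‖) := by
  have hpi : ‖(π : ℂ) ^ ((3 : ℂ) / 2 + μ₁ - μ₃)‖ = π ^ (3 / 2 + (μ₁ - μ₃).re) := by
    rw [Complex.norm_cpow_eq_rpow_re_of_pos Real.pi_pos, add_sub_assoc, Complex.add_re]
    norm_num
  simp only [Gb, norm_div, norm_mul, hpi, Complex.norm_ofNat]
  ring

/-- Bound for `G*_b(μ)` on a vertical plane `Re(μ) = η`. -/
theorem statement12 (η₁ η₂ : ℝ)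
    (h1 : ∀ n : ℤ, n ≤ 0 → (η₁ - η₂) / 2 ≠ (n : ℝ))
    (h2 : ∀ n : ℤ, n ≤ 0 → (η₁ - (-η₁ - η₂)) / 2 ≠ (n : ℝ))
    (h3 : ∀ n : ℤ, n ≤ 0 → ((-η₁ - η₂) - η₂) / 2 ≠ (n : ℝ)) :
    ∃ C : ℝ, ∀ μ₁ μ₂ : ℂ, μ₁.re = η₁ → μ₂.re = η₂ →
      ‖Gb μ₁ μ₂ (-μ₁ - μ₂)‖ ≤
        C * Mpoly (((μ₁ - μ₂).re - 1) / 2) (((μ₁ - (-μ₁ - μ₂)).re - 1) / 2)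
              ((((-μ₁ - μ₂) - μ₂).re - 1) / 2) μ₁ μ₂ (-μ₁ - μ₂) /
            Lpoly μ₁ μ₂ (-μ₁ - μ₂) := by
  obtain ⟨C₁, hC₁⟩ := exists_norm_Gamma_div_le h1 ((η₁ - η₂) / 2 + 1 / 2)
  obtain ⟨C₂, hC₂⟩ := exists_norm_Gamma_div_le h2 ((η₁ - (-η₁ - η₂)) / 2 + 1 / 2)
  obtain ⟨C₃, hC₃⟩ := exists_norm_Gamma_div_le h3 (1 / 2 - ((-η₁ - η₂) - η₂) / 2)
  refine ⟨4 * π ^ (3 / 2 + (η₁ - (-η₁ - η₂))) * (C₁ * C₂ * C₃), fun μ₁ μ₂ hμ₁ hμ₂ => ?_⟩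
  have hB₁ := hC₁ ((μ₁ - μ₂) / 2) ((1 + μ₁ - μ₂) / 2) (μ₁ - μ₂).im
    (by simp [hμ₁, hμ₂]) (by simp [hμ₁, hμ₂]; ring) (by simp [abs_div]) (by simp [abs_div])
  have hB₂ := hC₂ ((μ₁ - (-μ₁ - μ₂)) / 2) ((1 + μ₁ - (-μ₁ - μ₂)) / 2) (μ₁ - (-μ₁ - μ₂)).im
    (by simp [hμ₁, hμ₂]) (by simp [hμ₁, hμ₂]; ring) (by simp [abs_div]) (by simp [abs_div])
  have hB₃ := hC₃ (((-μ₁ - μ₂) - μ₂) / 2) ((1 + μ₂ - (-μ₁ - μ₂)) / 2) (μ₂ - (-μ₁ - μ₂)).im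
    (by simp [hμ₁, hμ₂]) (by simp [hμ₁, hμ₂]; ring) (by simp [abs_div]; exact abs_sub_comm _ _)
    (by simp [abs_div])
  have hB₁_nonneg := (div_nonneg (norm_nonneg _) (norm_nonneg _)).trans hB₁
  have hB₂_nonneg := (div_nonneg (norm_nonneg _) (norm_nonneg _)).trans hB₂
  have hB := mul_le_mul_of_nonneg_left
    (mul_le_mul (mul_le_mul hB₁ hB₂ (by positivity) hB₁_nonneg) hB₃ (by positivity)
      (mul_nonneg hB₁_nonneg hB₂_nonneg))
    (by positivity : 0 ≤ 4 * π ^ (3 / 2 + (η₁ - (-η₁ - η₂))))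
  rw [norm_Gb, mul_div_assoc, Lpoly, Mpoly_div_Mpoly, Mpoly]
  simp only [Complex.sub_re, Complex.neg_re, hμ₁, hμ₂]
  ring_nf at hB ⊢
  exact hB
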